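/- arXiv:1607.07185 — 5 statements merged into one kernel-verified Lean document; each statement's English description precedes it below -/
import Mathlib

section
/- Let g ≥ 2 and let Γ_g be the genus-g surface group. For every group homomorphism α : Γ_g → ℂˣ, the ℂ-vector space Z¹_α(Γ_g,ℂ) of α-twisted cocycles has dimension 2g if α is the trivial homomorphism, and dimension 2g − 1 otherwise. -/
/-!
A twisted cocycle `λ` for `α : G →* Rˣ` is the same as a homomorphism `x ↦ (λ x, α x)` into the
affine group `R ⋊ Rˣ`. On a presented group such homomorphisms are given by arbitrary values on the
generators, subject to the relators being sent to `1`. For `Γ_g` the single relator `∏ [aᵢ, bᵢ]`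
is sent to `1` iff the linear form `∑ (1 - α bᵢ) λ(aᵢ) + (α aᵢ - 1) λ(bᵢ)` vanishes on the values
of `λ`; this form is zero exactly when `α = 1`, so `Z¹_α(Γ_g, ℂ)` is `ℂ^{2g}` or a hyperplane in it.
-/

/-- The surface group relator `∏ i, [aᵢ, bᵢ]` in the free group on `Fin g × Bool`,
where `(i, true)` plays the role of `aᵢ` and `(i, false)` the role of `bᵢ`. -/
def surfaceRelator (g : ℕ) : FreeGroup (Fin g × Bool) :=
  (List.ofFn fun i : Fin g =>
    FreeGroup.of (i, true) * FreeGroup.of (i, false) *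
      (FreeGroup.of (i, true))⁻¹ * (FreeGroup.of (i, false))⁻¹).prod

/-- The genus-`g` surface group `⟨a₁,b₁,…,a_g,b_g | ∏ᵢ [aᵢ,bᵢ]⟩`. -/
def SurfaceGroup (g : ℕ) : Type :=
  PresentedGroup ({surfaceRelator g} : Set (FreeGroup (Fin g × Bool)))

instance (g : ℕ) : Group (SurfaceGroup g) := by
  unfold SurfaceGroup; infer_instance

/-- The space `Z¹_α(G, ℂ)` of `α`-twisted cocycles, as a `ℂ`-subspace of `G → ℂ`. -/
noncomputable def twistedCocycles {G : Type*} [Group G] (α : G →* ℂˣ) : Submodule ℂ (G → ℂ) where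
  carrier := {l | ∀ x y : G, l (x * y) = l x + (α x : ℂ) * l y}
  zero_mem' := by intro x y; simp
  add_mem' := by
    intro a b ha hb x y
    simp only [Pi.add_apply, ha x y, hb x y]; ring
  smul_mem' := by
    intro c a ha x y
    simp only [Pi.smul_apply, smul_eq_mul, ha x y]; ring


section TwistedCocycle

variable {G R : Type*} [Group G] [CommRing R]

def IsTwistedCocycle (α : G →* Rˣ) (l : G → R) : Prop :=
  ∀ x y, l (x * y) = l x + α x * l y

theorem mem_twistedCocycles_iff {α : G →* ℂˣ} {l : G → ℂ} :
    l ∈ twistedCocycles α ↔ IsTwistedCocycle α l :=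
  Iff.rfl

namespace IsTwistedCocycle

variable {α : G →* Rˣ} {l : G → R}

theorem map_one (hl : IsTwistedCocycle α l) : l 1 = 0 := by
  simpa using hl 1 1

theorem map_inv (hl : IsTwistedCocycle α l) (x : G) : l x⁻¹ = -(↑(α x)⁻¹ * l x) := by
  have h := hl x x⁻¹
  rw [mul_inv_cancel, hl.map_one] at h
  linear_combination -(↑(α x)⁻¹ : R) * h - l x⁻¹ * (α x).inv_mul

theorem map_commutator (hl : IsTwistedCocycle α l) (a b : G) :
    l (a * b * a⁻¹ * b⁻¹) = (1 - α b) * l a + (α a - 1) * l b := by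
  rw [hl, hl, hl, hl.map_inv, hl.map_inv]
  simp only [map_mul, _root_.map_inv, Units.val_mul]
  linear_combination (-(l a * α b) - l b * α b * ↑(α b)⁻¹ : R) * (α a).mul_inv - l b * (α b).mul_inv

theorem map_prod_commutators (hl : IsTwistedCocycle α l) {n : ℕ} (a b : Fin n → G) :
    l (List.ofFn fun i => a i * b i * (a i)⁻¹ * (b i)⁻¹).prod
      = ∑ i, ((1 - α (b i)) * l (a i) + (α (a i) - 1) * l (b i)) := by
  induction n with
  | zero => simp [hl.map_one]
  | succ n ih =>
    have hcomm : α (a 0 * b 0 * (a 0)⁻¹ * (b 0)⁻¹) = 1 := by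
      rw [map_mul, map_mul, map_mul, _root_.map_inv, _root_.map_inv, mul_inv_cancel_comm,
        mul_inv_cancel]
    rw [List.ofFn_succ, List.prod_cons, hl, Fin.sum_univ_succ, hl.map_commutator, hcomm,
      Units.val_one, one_mul, ih]

theorem comp {H : Type*} [Group H] (hl : IsTwistedCocycle α l) (f : H →* G) :
    IsTwistedCocycle (α.comp f) (l ∘ f) := fun x y => by
  simp only [Function.comp_apply, map_mul, hl (f x) (f y), MonoidHom.comp_apply]

theorem eqOn_closure {m : G → R} (hl : IsTwistedCocycle α l) (hm : IsTwistedCocycle α m)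
    {s : Set G} (h : s.EqOn l m) : Set.EqOn l m (Subgroup.closure s) := by
  intro x hx
  induction hx using Subgroup.closure_induction with
  | mem x hx => exact h hx
  | one => rw [hl.map_one, hm.map_one]
  | mul x y _ _ hx hy => rw [hl, hm, hx, hy]
  | inv x _ hx => rw [hl.map_inv, hm.map_inv, hx]

end IsTwistedCocycle

open SemidirectProduct Multiplicative

variable (R) in
/-- `Multiplicative R ⋊[affineAction R] Rˣ` is the affine group of `R`, with `(x, u)` acting as
`t ↦ u t + x`. -/
noncomputable def affineAction : Rˣ →* MulAut (Multiplicative R) :=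
  (MulAutMultiplicative R).symm.toMonoidHom.comp (DistribMulAction.toAddAut Rˣ R)

@[simp]
theorem toAdd_affineAction_apply (u : Rˣ) (x : Multiplicative R) :
    toAdd (affineAction R u x) = u * toAdd x :=
  rfl

theorem isTwistedCocycle_toAdd_left (F : G →* Multiplicative R ⋊[affineAction R] Rˣ) :
    IsTwistedCocycle (rightHom.comp F) (fun x => toAdd (F x).left) := fun x y => by
  simp [mul_left]

end TwistedCocycle

namespace PresentedGroup

open SemidirectProduct Multiplicative

variable {S R : Type*} [CommRing R] {rels : Set (FreeGroup S)}

theorem isTwistedCocycle_ext {α : PresentedGroup rels →* Rˣ} {l m : PresentedGroup rels → R}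
    (hl : IsTwistedCocycle α l) (hm : IsTwistedCocycle α m) (h : ∀ s, l (of s) = m (of s)) :
    l = m := by
  funext x
  refine hl.eqOn_closure hm ?_ (by simp : x ∈ Subgroup.closure (Set.range of))
  rintro _ ⟨s, rfl⟩
  exact h s

theorem exists_isTwistedCocycle (α : PresentedGroup rels →* Rˣ) (v : S → R)
    (hrels : ∀ r ∈ rels, ∀ l : FreeGroup S → R, IsTwistedCocycle (α.comp (mk rels)) l →
      (∀ s, l (FreeGroup.of s) = v s) → l r = 0) :
    ∃ l, IsTwistedCocycle α l ∧ ∀ s, l (of s) = v s := by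
  let gen : S → Multiplicative R ⋊[affineAction R] Rˣ := fun s => ⟨ofAdd (v s), α (of s)⟩
  have hright : rightHom.comp (FreeGroup.lift gen) = α.comp (mk rels) :=
    FreeGroup.ext_hom _ _ fun s => by
      simp only [MonoidHom.comp_apply, rightHom_eq_right, FreeGroup.lift_apply_of]; rfl
  have hgen : ∀ r ∈ rels, FreeGroup.lift gen r = 1 := by
    intro r hr
    have hleft := hrels r hr _ (hright ▸ isTwistedCocycle_toAdd_left (FreeGroup.lift gen))
      (by simp [gen])
    ext
    · exact hleft
    · simpa [one_of_mem hr] using DFunLike.congr_fun hright r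
  let F := toGroup hgen
  have hα : rightHom.comp F = α := PresentedGroup.ext fun s => by simp [F, gen]
  exact ⟨_, hα ▸ isTwistedCocycle_toAdd_left F, fun s => by simp [F, gen]⟩

end PresentedGroup

namespace SurfaceGroup

variable {g : ℕ} {R : Type*} [CommRing R]

def mk : FreeGroup (Fin g × Bool) →* SurfaceGroup g := PresentedGroup.mk _

def of (p : Fin g × Bool) : SurfaceGroup g := mk (FreeGroup.of p)

def a (i : Fin g) : SurfaceGroup g := of (i, true)

def b (i : Fin g) : SurfaceGroup g := of (i, false)

theorem mk_surfaceRelator : mk (surfaceRelator g) = 1 :=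
  PresentedGroup.one_of_mem rfl

noncomputable def relatorForm (α : SurfaceGroup g →* Rˣ) : (Fin g × Bool → R) →ₗ[R] R :=
  ∑ i, ((1 - (α (b i) : R)) • LinearMap.proj (i, true) +
    ((α (a i) : R) - 1) • LinearMap.proj (i, false))

theorem relatorForm_apply (α : SurfaceGroup g →* Rˣ) (v : Fin g × Bool → R) :
    relatorForm α v = ∑ i, ((1 - α (b i)) * v (i, true) + (α (a i) - 1) * v (i, false)) := by
  simp [relatorForm]

theorem relatorForm_single_true (α : SurfaceGroup g →* Rˣ) (i : Fin g) :
    relatorForm α (Pi.single (i, true) 1) = 1 - α (b i) := by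
  simp [relatorForm_apply, Pi.single_apply]

theorem relatorForm_single_false (α : SurfaceGroup g →* Rˣ) (i : Fin g) :
    relatorForm α (Pi.single (i, false) 1) = α (a i) - 1 := by
  simp [relatorForm_apply, Pi.single_apply]

theorem relatorForm_eq_zero_iff (α : SurfaceGroup g →* Rˣ) : relatorForm α = 0 ↔ α = 1 := by
  refine ⟨fun h => PresentedGroup.ext ?_, fun h => ?_⟩
  · rintro ⟨i, _ | _⟩
    · have hb : (1 : R) - α (b i) = 0 := by
        rw [← relatorForm_single_true, h, LinearMap.zero_apply]
      exact Units.val_eq_one.mp (sub_eq_zero.mp hb).symm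
    · have ha : (α (a i) : R) - 1 = 0 := by
        rw [← relatorForm_single_false, h, LinearMap.zero_apply]
      exact Units.val_eq_one.mp (sub_eq_zero.mp ha)
  · ext v
    simp [relatorForm_apply, h]

theorem apply_surfaceRelator_eq_relatorForm (α : SurfaceGroup g →* Rˣ)
    {l : FreeGroup (Fin g × Bool) → R} (hl : IsTwistedCocycle (α.comp mk) l) :
    l (surfaceRelator g) = relatorForm α fun p => l (FreeGroup.of p) := by
  rw [surfaceRelator, hl.map_prod_commutators, relatorForm_apply]
  rfl

theorem relatorForm_eq_zero_of_isTwistedCocycle {α : SurfaceGroup g →* Rˣ} {l : SurfaceGroup g → R}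
    (hl : IsTwistedCocycle α l) : relatorForm α (fun p => l (of p)) = 0 := by
  have h := apply_surfaceRelator_eq_relatorForm α (hl.comp mk)
  rwa [Function.comp_apply, mk_surfaceRelator, hl.map_one, eq_comm] at h

noncomputable def twistedCocyclesEquivKer (α : SurfaceGroup g →* ℂˣ) :
    twistedCocycles α ≃ₗ[ℂ] LinearMap.ker (relatorForm α) := by
  refine LinearEquiv.ofBijective
    { toFun l := ⟨fun p => l.1 (of p),
        relatorForm_eq_zero_of_isTwistedCocycle (mem_twistedCocycles_iff.mp l.2)⟩
      map_add' _ _ := rfl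
      map_smul' _ _ := rfl } ⟨fun l m hlm => ?_, fun v => ?_⟩
  · exact Subtype.ext <| PresentedGroup.isTwistedCocycle_ext (mem_twistedCocycles_iff.mp l.2)
      (mem_twistedCocycles_iff.mp m.2) fun p => congr_fun (Subtype.ext_iff.mp hlm) p
  · obtain ⟨l, hl, hlv⟩ := PresentedGroup.exists_isTwistedCocycle α v.1 fun r hr l hl hlv => by
      rw [Set.mem_singleton_iff.mp hr, apply_surfaceRelator_eq_relatorForm α hl, funext hlv]
      exact v.2
    exact ⟨⟨l, hl⟩, Subtype.ext (funext hlv)⟩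

end SurfaceGroup

open scoped Classical

theorem finrank_twistedCocycles_surfaceGroup_general (g : ℕ)
    (α : SurfaceGroup g →* ℂˣ) :
    Module.finrank ℂ (twistedCocycles α) = if α = 1 then 2 * g else 2 * g - 1 := by
  have hdim : Module.finrank ℂ (Fin g × Bool → ℂ) = 2 * g := by simp [mul_comm]
  rw [(SurfaceGroup.twistedCocyclesEquivKer α).finrank_eq]
  split_ifs with hα
  · rw [(SurfaceGroup.relatorForm_eq_zero_iff α).2 hα, LinearMap.ker_zero, finrank_top, hdim]
  · have := Module.Dual.finrank_ker_add_one_of_ne_zero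
      (mt (SurfaceGroup.relatorForm_eq_zero_iff α).1 hα)
    omega

/-- for `g ≥ 2` and a homomorphism `α : Γ_g → ℂˣ`, the space
`Z¹_α(Γ_g, ℂ)` has dimension `2g` if `α` is trivial and `2g - 1` otherwise. -/
theorem finrank_twistedCocycles_surfaceGroup (g : ℕ) (hg : 2 ≤ g)
    (α : SurfaceGroup g →* ℂˣ) :
    Module.finrank ℂ (twistedCocycles α) = if α = 1 then 2 * g else 2 * g - 1 :=
  finrank_twistedCocycles_surfaceGroup_general g α
end

section
/- Let g ≥ 2 and let x be a nonzero vector in ℝ^{2g}. Let V be a linear subspace of ℝ^{2g} such that M·V ⊆ V for every M ∈ Sp(2g,ℝ) with Mx = x. Then V is one of: the zero subspace, the line ℝx, the symplectic orthogonal x^⊥ = {y ∈ ℝ^{2g} : ω(x,y) = 0}, or all of ℝ^{2g}. -/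
/-- The standard symplectic form on `ℝ^(2g)`:
`ω x y = ∑_{i=1}^g (xᵢ y_{g+i} - x_{g+i} yᵢ)`. -/
noncomputable def omegaForm (g : ℕ) (x y : Fin (2 * g) → ℝ) : ℝ :=
  ∑ i : Fin g,
    (x ⟨i.val, by have := i.isLt; omega⟩ * y ⟨g + i.val, by have := i.isLt; omega⟩ -
      x ⟨g + i.val, by have := i.isLt; omega⟩ * y ⟨i.val, by have := i.isLt; omega⟩)

/-- The symplectic group `Sp(2g, ℝ)`: real `2g × 2g` matrices preserving `ω`. -/
def Sp (g : ℕ) : Set (Matrix (Fin (2 * g)) (Fin (2 * g)) ℝ) :=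
  {M | ∀ x y : Fin (2 * g) → ℝ, omegaForm g (M.mulVec x) (M.mulVec y) = omegaForm g x y}

/-- The integer symplectic group `Sp(2g, ℤ)`, viewed as the set of symplectic
matrices all of whose entries are integers. -/
def SpZ (g : ℕ) : Set (Matrix (Fin (2 * g)) (Fin (2 * g)) ℝ) :=
  {M | M ∈ Sp g ∧ ∀ i j, ∃ k : ℤ, M i j = (k : ℝ)}

/-- The symplectic orthogonal `x^⊥ = {y : ω(x,y) = 0}`, as a linear subspace. -/
noncomputable def symplOrth (g : ℕ) (x : Fin (2 * g) → ℝ) :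
    Submodule ℝ (Fin (2 * g) → ℝ) where
  carrier := {y | omegaForm g x y = 0}
  zero_mem' := by simp [omegaForm]
  add_mem' := by
    intro a b ha hb
    simp only [Set.mem_setOf_eq] at *
    have h : omegaForm g x (a + b) = omegaForm g x a + omegaForm g x b := by
      unfold omegaForm
      rw [← Finset.sum_add_distrib]
      exact Finset.sum_congr rfl fun i _ => by simp only [Pi.add_apply]; ring
    rw [h, ha, hb, add_zero]
  smul_mem' := by
    intro c a ha
    simp only [Set.mem_setOf_eq] at *
    have h : omegaForm g x (c • a) = c * omegaForm g x a := by
      unfold omegaForm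
      rw [Finset.mul_sum]
      exact Finset.sum_congr rfl fun i _ => by
        simp only [Pi.smul_apply, smul_eq_mul]; ring
    rw [h, ha, mul_zero]

/-- The first standard basis vector `e₁` of `ℝ^(2g)`. -/
def stdBasis1 (g : ℕ) : Fin (2 * g) → ℝ := fun j => if j.val = 0 then 1 else 0

/-! Transvections `y ↦ y + ω(v, y) v` with `ω(v, x) = 0` are symplectic and fix `x`, so `V` is
stable under them; hence `ω(v, u) v ∈ V` for all `u ∈ V` and `v ∈ x^⊥`. If `V` contains some
`u ∉ ℝx`, nondegeneracy of `ω` yields `v₀ ∈ x^⊥` with `ω(v₀, u) ≠ 0`, so `v₀ ∈ V`, and every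
`w ∈ x^⊥` lies in `V`: directly if `ω(w, u) ≠ 0`, and via `w + v₀` otherwise. As `x^⊥` is a
hyperplane, `V` is then `x^⊥` or everything; otherwise `V ⊆ ℝx`, so `V = 0` or `V = ℝx`. -/

open LinearMap Submodule

namespace LinearMap

theorem IsAlt.apply_transvection_apply_transvection {R M : Type*} [CommRing R] [AddCommGroup M]
    [Module R M] {B : LinearMap.BilinForm R M} (hB : IsAlt B) (v y z : M) :
    B (transvection (B v) v y) (transvection (B v) v z) = B y z := by
  simp only [transvection.apply, map_add, map_smul, add_apply, smul_apply, smul_eq_mul, hB v,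
    ← hB.neg v y]
  ring

end LinearMap

section Field

variable {K M : Type*} [Field K] [AddCommGroup M] [Module K M]

theorem Submodule.eq_bot_or_eq_of_le_span_singleton {W : Submodule K M} {x : M}
    (h : W ≤ K ∙ x) : W = ⊥ ∨ W = K ∙ x := by
  rcases eq_or_ne x 0 with rfl | hx
  · simp_all
  · exact (nonzero_span_atom x hx).le_iff.mp h

namespace LinearMap

variable {B : LinearMap.BilinForm K M}

theorem SeparatingRight.exists_apply_eq_zero_and_apply_ne_zero (hB : SeparatingRight B)
    {x u : M} (hu : u ∉ K ∙ x) : ∃ v, B v x = 0 ∧ B v u ≠ 0 := by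
  by_contra! h
  have hker : ⨅ _ : Unit, ker (B.flip x) ≤ ker (B.flip u) := fun v hv => h v (by simpa using hv)
  obtain ⟨c, hc⟩ := mem_span_singleton.mp (by simpa using mem_span_of_iInf_ker_le_ker hker)
  refine hu (mem_span_singleton.mpr ⟨c, (sub_eq_zero.mp (hB _ fun v => ?_)).symm⟩)
  simpa [sub_eq_zero] using (LinearMap.congr_fun hc v).symm

theorem IsAlt.ker_le_of_forall_transvection_mem (hB : IsAlt B) (hsep : SeparatingRight B)
    {x : M} {W : Submodule K M} (hW : ∀ v, B v x = 0 → ∀ u ∈ W, transvection (B v) v u ∈ W)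
    {u : M} (huW : u ∈ W) (hux : u ∉ K ∙ x) : ker (B x) ≤ W := by
  have hsmul : ∀ v, B v x = 0 → B v u • v ∈ W := fun v hv => by
    simpa [transvection.apply] using W.sub_mem (hW v hv u huW) huW
  obtain ⟨v₀, hv₀x, hv₀u⟩ := hsep.exists_apply_eq_zero_and_apply_ne_zero hux
  have hv₀W : v₀ ∈ W := (W.smul_mem_iff hv₀u).mp (hsmul v₀ hv₀x)
  intro w hw
  have hwx : B w x = 0 := hB.eq_iff.mp hw
  by_cases hwu : B w u = 0
  · have hsum : w + v₀ ∈ W :=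
      (W.smul_mem_iff (by simpa [hwu] using hv₀u)).mp (hsmul _ (by simp [hwx, hv₀x]))
    simpa using W.sub_mem hsum hv₀W
  · exact (W.smul_mem_iff hwu).mp (hsmul w hwx)

theorem IsAlt.eq_bot_or_eq_span_singleton_or_eq_ker_or_eq_top_of_forall_transvection_mem
    (hB : IsAlt B) (hsep : SeparatingRight B) {x : M} {W : Submodule K M}
    (hW : ∀ v, B v x = 0 → ∀ u ∈ W, transvection (B v) v u ∈ W) :
    W = ⊥ ∨ W = K ∙ x ∨ W = ker (B x) ∨ W = ⊤ := by
  by_cases hWx : W ≤ K ∙ x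
  · rcases eq_bot_or_eq_of_le_span_singleton hWx with h | h <;> simp [h]
  · obtain ⟨u, huW, hux⟩ := SetLike.not_le_iff_exists.mp hWx
    have hker := hB.ker_le_of_forall_transvection_mem hsep hW huW hux
    right; right
    rcases eq_or_ne (B x) 0 with hx | hx
    · exact Or.inr (eq_top_iff.mpr (by simpa [hx] using hker))
    · exact ((isCoatom_ker_of_surjective (surjective_of_ne_zero hx)).le_iff.mp hker).symm

end LinearMap

end Field

noncomputable def omegaBilinForm (g : ℕ) : LinearMap.BilinForm ℝ (Fin (2 * g) → ℝ) :=
  mk₂ ℝ (omegaForm g)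
    (fun x x' y => by
      simp only [omegaForm, Pi.add_apply, ← Finset.sum_add_distrib]
      exact Finset.sum_congr rfl fun _ _ => by ring)
    (fun c x y => by
      simp only [omegaForm, Pi.smul_apply, smul_eq_mul, Finset.mul_sum]
      exact Finset.sum_congr rfl fun _ _ => by ring)
    (fun x y y' => by
      simp only [omegaForm, Pi.add_apply, ← Finset.sum_add_distrib]
      exact Finset.sum_congr rfl fun _ _ => by ring)
    (fun c x y => by
      simp only [omegaForm, Pi.smul_apply, smul_eq_mul, Finset.mul_sum]
      exact Finset.sum_congr rfl fun _ _ => by ring)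

variable {g : ℕ}

@[simp]
theorem omegaBilinForm_apply (x y : Fin (2 * g) → ℝ) :
    omegaBilinForm g x y = omegaForm g x y :=
  rfl

theorem omegaBilinForm_isAlt : IsAlt (omegaBilinForm g) := fun x => by simp [omegaForm, mul_comm]

theorem omegaForm_single_low (i : Fin g) (u : Fin (2 * g) → ℝ) :
    omegaForm g (Pi.single ⟨i, by omega⟩ 1) u = u ⟨g + i, by omega⟩ := by
  have h : ∀ k : Fin g, g + k.val ≠ i.val := fun k => by omega
  simp [omegaForm, Pi.single_apply, Fin.val_inj, h]

theorem omegaForm_single_high (i : Fin g) (u : Fin (2 * g) → ℝ) :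
    omegaForm g (Pi.single ⟨g + i, by omega⟩ 1) u = -u ⟨i, by omega⟩ := by
  have h : ∀ k : Fin g, k.val ≠ g + i.val := fun k => by omega
  simp [omegaForm, Pi.single_apply, Fin.val_inj, h]

theorem omegaBilinForm_separatingRight : SeparatingRight (omegaBilinForm g) := by
  intro u hu
  funext j
  by_cases hj : j.val < g
  · simpa [omegaForm_single_high ⟨j, hj⟩] using hu (Pi.single ⟨g + j, by omega⟩ 1)
  · have hlt : j.val - g < g := by omega
    have hj' : g + (j.val - g) = j := by omega
    simpa [omegaForm_single_low ⟨j - g, hlt⟩, hj'] using hu (Pi.single ⟨j - g, by omega⟩ 1)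

theorem toMatrix'_transvection_mem_Sp (v : Fin (2 * g) → ℝ) :
    toMatrix' (transvection (omegaBilinForm g v) v) ∈ Sp g := fun y z => by
  simpa only [toMatrix'_mulVec, omegaBilinForm_apply] using
    omegaBilinForm_isAlt.apply_transvection_apply_transvection v y z

theorem symplOrth_eq_ker (x : Fin (2 * g) → ℝ) : symplOrth g x = ker (omegaBilinForm g x) := rfl

theorem stabilizer_invariant_subspace_classification_general (g : ℕ)
    (x : Fin (2 * g) → ℝ) (V : Submodule ℝ (Fin (2 * g) → ℝ))
    (hV : ∀ M ∈ Sp g, M.mulVec x = x → ∀ v ∈ V, M.mulVec v ∈ V) :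
    V = ⊥ ∨ V = Submodule.span ℝ {x} ∨ V = symplOrth g x ∨ V = ⊤ := by
  rw [symplOrth_eq_ker]
  refine
    omegaBilinForm_isAlt.eq_bot_or_eq_span_singleton_or_eq_ker_or_eq_top_of_forall_transvection_mem
      omegaBilinForm_separatingRight fun v hvx u hu => ?_
  have hfix : (toMatrix' (transvection (omegaBilinForm g v) v)).mulVec x = x := by
    simp [toMatrix'_mulVec, transvection.apply, hvx]
  simpa [toMatrix'_mulVec] using hV _ (toMatrix'_transvection_mem_Sp v) hfix u hu

/-- for `g ≥ 2` and `x ≠ 0` in `ℝ^(2g)`, any linear subspace `V`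
invariant under every symplectic matrix fixing `x` equals `0`, `ℝx`, `x^⊥`
or `ℝ^(2g)`. -/
theorem stabilizer_invariant_subspace_classification (g : ℕ) (hg : 2 ≤ g)
    (x : Fin (2 * g) → ℝ) (hx : x ≠ 0) (V : Submodule ℝ (Fin (2 * g) → ℝ))
    (hV : ∀ M ∈ Sp g, M.mulVec x = x → ∀ v ∈ V, M.mulVec v ∈ V) :
    V = ⊥ ∨ V = Submodule.span ℝ {x} ∨ V = symplOrth g x ∨ V = ⊤ :=
  stabilizer_invariant_subspace_classification_general g x V hV
end

section
/- Let g ≥ 2 and let x ∈ ℝ^{2g}. If x ∉ ℚ^{2g}, then the set {M·x + k : M ∈ Sp(2g,ℤ), k ∈ ℤ^{2g}} is dense in ℝ^{2g}. If x ∈ ℚ^{2g}, then the image of the orbit {M·x : M ∈ Sp(2g,ℤ)} in the torus ℝ^{2g}/ℤ^{2g} is finite. -/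
/-!
Irrational case: after applying `J` if necessary, some coordinate `u_p` of the upper half `u` of
`x = (u, l)` is irrational. The symplectic shear `(u, l) ↦ (u, l + C u)`, with `C` symmetric
integral and supported on row and column `p`, moves `l_i` by `c_i u_p` for `i ≠ p`; since
`ℤ u_p + ℤ` is dense, it brings `l` within `ε` of any target modulo `ℤ`, and `c_p` can be chosen so
that `l_p` stays irrational. The shear `(u, l) ↦ (u + D l, l)` then does the same for `u`.

Rational case: if `d x` is integral then so is `d (M x)` for every integral `M`, so the orbit lies
in the `d`-torsion of the torus, which is finite.
-/

open Matrix

section Approximation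

variable {α ε : ℝ}

theorem exists_int_approx (hα : Irrational α) (c t : ℝ) (hε : 0 < ε) :
    ∃ n k : ℤ, |c + n * α + k - t| < ε := by
  have hdense : Dense (AddSubgroup.closure {α, 1} : Set ℝ) :=
    dense_addSubgroupClosure_pair_iff.mpr (by rwa [div_one])
  obtain ⟨y, hy, hyt⟩ := Metric.dense_iff.mp hdense (t - c) ε hε
  obtain ⟨n, k, rfl⟩ := AddSubgroup.mem_closure_pair.mp hyt
  refine ⟨n, k, ?_⟩
  rw [Metric.mem_ball, Real.dist_eq, zsmul_eq_mul, zsmul_eq_mul, mul_one] at hy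
  rwa [← abs_neg, show -(c + n * α + k - t) = t - c - (n * α + k) by ring, abs_sub_comm]

theorem eq_of_not_irrational_add_mul (hα : Irrational α) {c : ℝ} {n n' : ℤ}
    (h : ¬Irrational (c + n * α)) (h' : ¬Irrational (c + n' * α)) : n = n' := by
  by_contra hne
  have hdiff : Irrational ((c + n * α) - (c + n' * α)) := by
    rw [show (c + n * α) - (c + n' * α) = ((n - n' : ℤ) : ℝ) * α by push_cast; ring]
    exact hα.intCast_mul (sub_ne_zero.mpr hne)
  rw [sub_eq_add_neg] at hdiff
  exact hdiff.add_cases.elim h fun hneg => h' hneg.of_neg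

theorem exists_int_approx_irrational (hα : Irrational α) (c t : ℝ) (hε : 0 < ε) :
    ∃ n k : ℤ, |c + n * α + k - t| < ε ∧ Irrational (c + n * α) := by
  by_cases hall : ∀ n : ℤ, Irrational (c + n * α)
  · obtain ⟨n, k, hnk⟩ := exists_int_approx hα c t hε
    exact ⟨n, k, hnk, hall n⟩
  push Not at hall
  obtain ⟨n₀, hn₀⟩ := hall
  -- only `n₀` is bad, so approximate along the odd offsets `n₀ + 1 + 2m`
  obtain ⟨m, k, hmk⟩ :=
    exists_int_approx (hα.natCast_mul two_ne_zero) (c + (n₀ + 1 : ℤ) * α) t hε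
  refine ⟨n₀ + 1 + 2 * m, k, ?_, ?_⟩
  · convert hmk using 3
    push_cast
    ring
  · by_contra hn
    have := eq_of_not_irrational_add_mul hα hn hn₀
    omega

end Approximation

theorem exists_nat_mul_eq_intCast {ι : Type*} [Fintype ι] {x : ι → ℝ}
    (hx : ∀ i, ∃ q : ℚ, x i = q) : ∃ d : ℕ, 0 < d ∧ ∀ i, ∃ z : ℤ, d * x i = z := by
  choose q hq using hx
  refine ⟨∏ i, (q i).den, Finset.prod_pos fun i _ => (q i).pos, fun i => ?_⟩
  obtain ⟨m, hm⟩ := Finset.dvd_prod_of_mem (fun i => (q i).den) (Finset.mem_univ i)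
  refine ⟨m * (q i).num, ?_⟩
  have hnum := congrArg (Rat.cast : ℚ → ℝ) (Rat.mul_den_eq_num (q i))
  push_cast at hnum
  rw [hm, hq]
  push_cast
  rw [← hnum]
  ring

theorem exists_nat_mul_mulVec_eq_intCast {ι : Type*} [Fintype ι] {M : Matrix ι ι ℝ}
    (hM : ∀ i j, ∃ k : ℤ, M i j = k) {x : ι → ℝ} {d : ℕ} (hx : ∀ j, ∃ z : ℤ, d * x j = z) :
    ∀ i, ∃ z : ℤ, d * (M *ᵥ x) i = z := by
  choose a ha using hM
  choose z hz using hx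
  refine fun i => ⟨∑ j, a i j * z j, ?_⟩
  simp only [mulVec, dotProduct, Finset.mul_sum, ha]
  push_cast
  exact Finset.sum_congr rfl fun j _ => by rw [← hz]; ring

theorem finite_torus_image_of_rational {g : ℕ} {x : Fin (2 * g) → ℝ}
    (hx : ∀ i, ∃ q : ℚ, x i = q) :
    Set.Finite ((fun y : Fin (2 * g) → ℝ => fun i => ((y i : ℝ) : AddCircle (1 : ℝ))) ''
      {y | ∃ M ∈ SpZ g, y = M.mulVec x}) := by
  obtain ⟨d, hd, hdx⟩ := exists_nat_mul_eq_intCast hx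
  refine (Set.Finite.pi (t := fun _ => {u : AddCircle (1 : ℝ) | d • u = 0})
    fun _ => AddCircle.finite_torsion 1 hd).subset ?_
  rintro _ ⟨_, ⟨M, hM, rfl⟩, rfl⟩ i -
  obtain ⟨z, hz⟩ := exists_nat_mul_mulVec_eq_intCast hM.2 hdx i
  rw [Set.mem_ofPred_eq, ← AddCircle.coe_nsmul, nsmul_eq_mul, hz, AddCircle.coe_eq_zero_iff]
  exact ⟨z, by simp⟩

namespace SpZ

variable {g : ℕ}

theorem mul_mem {M N : Matrix (Fin (2 * g)) (Fin (2 * g)) ℝ} (hM : M ∈ SpZ g) (hN : N ∈ SpZ g) :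
    M * N ∈ SpZ g := by
  refine ⟨fun x y => by rw [← mulVec_mulVec, ← mulVec_mulVec, hM.1, hN.1], fun i j => ?_⟩
  choose a ha using hM.2
  choose b hb using hN.2
  refine ⟨∑ l, a i l * b l j, ?_⟩
  simp only [mul_apply, ha, hb]
  push_cast
  rfl

end SpZ

/-- Indexes `Fin (2 * g)` by the two halves `i ↦ i` and `i ↦ g + i` paired by `omegaForm`. -/
def halvesEquiv (g : ℕ) : Fin g ⊕ Fin g ≃ Fin (2 * g) :=
  finSumFinEquiv.trans (finCongr (two_mul g).symm)

def omegaHalves {g : ℕ} (v w : Fin g ⊕ Fin g → ℝ) : ℝ :=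
  v ∘ Sum.inl ⬝ᵥ w ∘ Sum.inr - v ∘ Sum.inr ⬝ᵥ w ∘ Sum.inl

theorem omegaForm_eq_omegaHalves {g : ℕ} (x y : Fin (2 * g) → ℝ) :
    omegaForm g x y = omegaHalves (x ∘ halvesEquiv g) (y ∘ halvesEquiv g) := by
  simp only [omegaForm, omegaHalves, dotProduct, ← Finset.sum_sub_distrib]
  rfl

def blockMatrix {g : ℕ} (P Q R S : Matrix (Fin g) (Fin g) ℤ) :
    Matrix (Fin (2 * g)) (Fin (2 * g)) ℝ :=
  ((fromBlocks P Q R S).submatrix (halvesEquiv g).symm (halvesEquiv g).symm).map (↑)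

section BlockMatrix

variable {g : ℕ} {P Q R S : Matrix (Fin g) (Fin g) ℤ}

theorem blockMatrix_mulVec_comp (x : Fin (2 * g) → ℝ) :
    (blockMatrix P Q R S *ᵥ x) ∘ halvesEquiv g =
      fromBlocks (P.map (↑)) (Q.map (↑)) (R.map (↑)) (S.map (↑)) *ᵥ (x ∘ halvesEquiv g) := by
  rw [blockMatrix, ← submatrix_map, submatrix_mulVec_equiv, Equiv.symm_symm, fromBlocks_map]
  ext s
  simp

theorem blockMatrix_mulVec_inl (x : Fin (2 * g) → ℝ) (i : Fin g) :
    (blockMatrix P Q R S *ᵥ x) (halvesEquiv g (.inl i)) =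
      (P.map (↑) *ᵥ (x ∘ halvesEquiv g) ∘ .inl) i +
        (Q.map (↑) *ᵥ (x ∘ halvesEquiv g) ∘ .inr) i := by
  simpa [fromBlocks_mulVec] using congrFun (blockMatrix_mulVec_comp x) (.inl i)

theorem blockMatrix_mulVec_inr (x : Fin (2 * g) → ℝ) (i : Fin g) :
    (blockMatrix P Q R S *ᵥ x) (halvesEquiv g (.inr i)) =
      (R.map (↑) *ᵥ (x ∘ halvesEquiv g) ∘ .inl) i +
        (S.map (↑) *ᵥ (x ∘ halvesEquiv g) ∘ .inr) i := by
  simpa [fromBlocks_mulVec] using congrFun (blockMatrix_mulVec_comp x) (.inr i)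

theorem blockMatrix_mem_SpZ
    (h : ∀ v w, omegaHalves (fromBlocks (P.map (↑)) (Q.map (↑)) (R.map (↑)) (S.map (↑)) *ᵥ v)
      (fromBlocks (P.map (↑)) (Q.map (↑)) (R.map (↑)) (S.map (↑)) *ᵥ w) = omegaHalves v w) :
    blockMatrix P Q R S ∈ SpZ g := by
  refine ⟨fun x y => ?_, fun i j => ⟨_, rfl⟩⟩
  rw [omegaForm_eq_omegaHalves, omegaForm_eq_omegaHalves, blockMatrix_mulVec_comp,
    blockMatrix_mulVec_comp, h]

end BlockMatrix

theorem Matrix.IsSymm.dotProduct_mulVec_comm {n R : Type*} [Fintype n] [CommSemiring R]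
    {A : Matrix n n R} (hA : A.IsSymm) (v w : n → R) : v ⬝ᵥ A *ᵥ w = A *ᵥ v ⬝ᵥ w := by
  rw [dotProduct_mulVec, ← mulVec_transpose, hA.eq, dotProduct_comm]

section Generators

variable {g : ℕ} (C : Matrix (Fin g) (Fin g) ℤ)

def lowerShear : Matrix (Fin (2 * g)) (Fin (2 * g)) ℝ := blockMatrix 1 0 C 1

def upperShear : Matrix (Fin (2 * g)) (Fin (2 * g)) ℝ := blockMatrix 1 C 0 1

def symplecticJ (g : ℕ) : Matrix (Fin (2 * g)) (Fin (2 * g)) ℝ := blockMatrix 0 1 (-1) 0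

local notation "e" => halvesEquiv g

variable {C} (x : Fin (2 * g) → ℝ) (i : Fin g)

theorem lowerShear_mulVec_inr :
    (lowerShear C *ᵥ x) (e (.inr i)) = x (e (.inr i)) + (C.map (↑) *ᵥ (x ∘ e) ∘ .inl) i := by
  simp [lowerShear, blockMatrix_mulVec_inr, add_comm]

theorem upperShear_mulVec_inl :
    (upperShear C *ᵥ x) (e (.inl i)) = x (e (.inl i)) + (C.map (↑) *ᵥ (x ∘ e) ∘ .inr) i := by
  simp [upperShear, blockMatrix_mulVec_inl]

theorem upperShear_mulVec_inr : (upperShear C *ᵥ x) (e (.inr i)) = x (e (.inr i)) := by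
  simp [upperShear, blockMatrix_mulVec_inr]

theorem symplecticJ_mulVec_inl : (symplecticJ g *ᵥ x) (e (.inl i)) = x (e (.inr i)) := by
  simp [symplecticJ, blockMatrix_mulVec_inl]

theorem lowerShear_mem_SpZ (hC : C.IsSymm) : lowerShear C ∈ SpZ g :=
  blockMatrix_mem_SpZ fun v w => by
    simp [omegaHalves, fromBlocks_mulVec, dotProduct_add, add_dotProduct,
      (hC.map _).dotProduct_mulVec_comm]

theorem upperShear_mem_SpZ (hC : C.IsSymm) : upperShear C ∈ SpZ g :=
  blockMatrix_mem_SpZ fun v w => by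
    simp [omegaHalves, fromBlocks_mulVec, dotProduct_add, add_dotProduct,
      (hC.map _).dotProduct_mulVec_comm]

theorem symplecticJ_mem_SpZ : symplecticJ g ∈ SpZ g :=
  blockMatrix_mem_SpZ fun v w => by
    have hneg : (-1 : Matrix (Fin g) (Fin g) ℤ).map ((↑) : ℤ → ℝ) = -1 := by
      rw [Matrix.map_neg _ Int.cast_neg]
      simp
    simp only [omegaHalves, fromBlocks_mulVec, hneg, Matrix.map_zero _ Int.cast_zero,
      Matrix.map_one _ Int.cast_zero Int.cast_one, Sum.elim_comp_inl, Sum.elim_comp_inr,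
      zero_mulVec, one_mulVec, neg_mulVec, zero_add, add_zero, dotProduct_neg, neg_dotProduct]
    rw [dotProduct_comm (v ∘ .inr)]
    ring

end Generators

section CrossMatrix

variable {ι : Type*} [DecidableEq ι]

def crossMatrix (p : ι) (c : ι → ℤ) : Matrix ι ι ℤ :=
  Matrix.of fun i j => if i = p then c j else if j = p then c i else 0

theorem crossMatrix_isSymm (p : ι) (c : ι → ℤ) : (crossMatrix p c).IsSymm := by
  ext i j
  by_cases hi : i = p <;> by_cases hj : j = p <;> simp [crossMatrix, hi, hj]

theorem crossMatrix_mulVec_self [Fintype ι] (p : ι) (c : ι → ℤ) (φ : ι → ℝ) :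
    ((crossMatrix p c).map (↑) *ᵥ φ) p = ∑ j, c j * φ j := by
  simp [crossMatrix, mulVec, dotProduct]

theorem crossMatrix_mulVec_of_ne [Fintype ι] {p i : ι} (hi : i ≠ p) (c : ι → ℤ) (φ : ι → ℝ) :
    ((crossMatrix p c).map (↑) *ᵥ φ) i = c i * φ p := by
  simp [crossMatrix, mulVec, dotProduct, hi]

theorem exists_isSymm_approx [Fintype ι] (p : ι) {φ : ι → ℝ} (hφ : Irrational (φ p))
    (ψ t : ι → ℝ) {ε : ℝ} (hε : 0 < ε) :
    ∃ C : Matrix ι ι ℤ, C.IsSymm ∧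
      (∀ i, ∃ k : ℤ, |ψ i + (C.map (↑) *ᵥ φ) i + k - t i| < ε) ∧
      Irrational (ψ p + (C.map (↑) *ᵥ φ) p) := by
  choose n k hnk using fun i => exists_int_approx hφ (ψ i) (t i) hε
  -- entry `p` is chosen last: row `p` also picks up the shift `E` caused by the other entries
  set E := ∑ j ∈ Finset.univ.erase p, (n j : ℝ) * φ j
  obtain ⟨m, kp, hm, hirr⟩ := exists_int_approx_irrational hφ (ψ p + E) (t p) hε
  set c := Function.update n p m
  have hc : ∀ j ≠ p, c j = n j := fun j hj => Function.update_of_ne hj _ _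
  have hp : ((crossMatrix p c).map (↑) *ᵥ φ) p = m * φ p + E := by
    rw [crossMatrix_mulVec_self, ← Finset.add_sum_erase _ _ (Finset.mem_univ p)]
    refine congrArg₂ _ (by simp [c]) (Finset.sum_congr rfl fun j hj => ?_)
    rw [hc j (Finset.ne_of_mem_erase hj)]
  refine ⟨crossMatrix p c, crossMatrix_isSymm p c, fun i => ?_, ?_⟩
  · by_cases hi : i = p
    · subst hi
      exact ⟨kp, by rw [hp]; convert hm using 3; ring⟩
    · exact ⟨k i, by rw [crossMatrix_mulVec_of_ne hi, hc i hi]; exact hnk i⟩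
  · rw [hp]
    convert hirr using 1
    ring

end CrossMatrix

def affineOrbit (g : ℕ) (x : Fin (2 * g) → ℝ) : Set (Fin (2 * g) → ℝ) :=
  {y | ∃ M ∈ SpZ g, ∃ k : Fin (2 * g) → ℤ, y = M.mulVec x + fun i => ((k i : ℤ) : ℝ)}

section AffineOrbit

variable {g : ℕ} {x : Fin (2 * g) → ℝ}

local notation "e" => halvesEquiv g

theorem affineOrbit_mulVec_subset {N : Matrix (Fin (2 * g)) (Fin (2 * g)) ℝ} (hN : N ∈ SpZ g) :
    affineOrbit g (N *ᵥ x) ⊆ affineOrbit g x := by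
  rintro _ ⟨M, hM, k, rfl⟩
  exact ⟨M * N, SpZ.mul_mem hM hN, k, by rw [mulVec_mulVec]⟩

theorem exists_mem_SpZ_approx {p : Fin g} (hp : Irrational (x (e (.inl p))))
    (y : Fin (2 * g) → ℝ) {ε : ℝ} (hε : 0 < ε) :
    ∃ M ∈ SpZ g, ∀ i, ∃ k : ℤ, |(M *ᵥ x) i + k - y i| < ε := by
  obtain ⟨C, hC, hCapprox, hCirr⟩ :=
    exists_isSymm_approx p (φ := (x ∘ e) ∘ .inl) hp ((x ∘ e) ∘ .inr) ((y ∘ e) ∘ .inr) hε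
  have hirr : Irrational ((lowerShear C *ᵥ x) (e (.inr p))) := by rwa [lowerShear_mulVec_inr]
  obtain ⟨D, hD, hDapprox, -⟩ := exists_isSymm_approx p (φ := ((lowerShear C *ᵥ x) ∘ e) ∘ .inr)
    hirr (((lowerShear C *ᵥ x) ∘ e) ∘ .inl) ((y ∘ e) ∘ .inl) hε
  refine ⟨upperShear D * lowerShear C, SpZ.mul_mem (upperShear_mem_SpZ hD) (lowerShear_mem_SpZ hC),
    (halvesEquiv g).forall_congr_right.mp ?_⟩
  rintro (i | i)
  · rw [← mulVec_mulVec, upperShear_mulVec_inl]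
    exact hDapprox i
  · rw [← mulVec_mulVec, upperShear_mulVec_inr, lowerShear_mulVec_inr]
    exact hCapprox i

theorem dense_affineOrbit_of_irrational_inl {p : Fin g} (hp : Irrational (x (e (.inl p)))) :
    Dense (affineOrbit g x) := by
  refine Metric.dense_iff.mpr fun y ε hε => ?_
  obtain ⟨M, hM, happrox⟩ := exists_mem_SpZ_approx hp y hε
  choose k hk using happrox
  refine ⟨M *ᵥ x + fun i => (k i : ℝ), (dist_pi_lt_iff hε).mpr fun i => ?_, M, hM, k, rfl⟩
  rw [Real.dist_eq]
  exact hk i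

theorem dense_affineOrbit_of_irrational {j : Fin (2 * g)} (hj : Irrational (x j)) :
    Dense (affineOrbit g x) := by
  obtain ⟨s, rfl⟩ := (halvesEquiv g).surjective j
  rcases s with p | p
  · exact dense_affineOrbit_of_irrational_inl hj
  · refine (dense_affineOrbit_of_irrational_inl (x := symplecticJ g *ᵥ x) (p := p) ?_).mono
      (affineOrbit_mulVec_subset symplecticJ_mem_SpZ)
    rwa [symplecticJ_mulVec_inl]

end AffineOrbit

theorem spz_affine_orbit_dense_or_finite_general (g : ℕ)
    (x : Fin (2 * g) → ℝ) :
    ((¬ ∀ i, ∃ q : ℚ, x i = (q : ℝ)) →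
      Dense {y : Fin (2 * g) → ℝ |
        ∃ M ∈ SpZ g, ∃ k : Fin (2 * g) → ℤ,
          y = M.mulVec x + fun i => ((k i : ℤ) : ℝ)}) ∧
    ((∀ i, ∃ q : ℚ, x i = (q : ℝ)) →
      Set.Finite
        ((fun y : Fin (2 * g) → ℝ => fun i => ((y i : ℝ) : AddCircle (1 : ℝ))) ''
          {y | ∃ M ∈ SpZ g, y = M.mulVec x})) := by
  refine ⟨fun hx => ?_, finite_torus_image_of_rational⟩
  push Not at hx
  obtain ⟨j, hj⟩ := hx
  exact dense_affineOrbit_of_irrational (j := j) fun ⟨q, hq⟩ => hj q hq.symm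

/-- if `x ∉ ℚ^(2g)` then `{M·x + k : M ∈ Sp(2g,ℤ), k ∈ ℤ^(2g)}`
is dense in `ℝ^(2g)`; if `x ∈ ℚ^(2g)` then the image of the `Sp(2g,ℤ)`-orbit
of `x` in the torus `ℝ^(2g)/ℤ^(2g)` is finite. -/
theorem spz_affine_orbit_dense_or_finite (g : ℕ) (hg : 2 ≤ g)
    (x : Fin (2 * g) → ℝ) :
    ((¬ ∀ i, ∃ q : ℚ, x i = (q : ℝ)) →
      Dense {y : Fin (2 * g) → ℝ |
        ∃ M ∈ SpZ g, ∃ k : Fin (2 * g) → ℤ,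
          y = M.mulVec x + fun i => ((k i : ℤ) : ℝ)}) ∧
    ((∀ i, ∃ q : ℚ, x i = (q : ℝ)) →
      Set.Finite
        ((fun y : Fin (2 * g) → ℝ => fun i => ((y i : ℝ) : AddCircle (1 : ℝ))) ''
          {y | ∃ M ∈ SpZ g, y = M.mulVec x})) :=
  spz_affine_orbit_dense_or_finite_general g x
end

section
/- Let g ≥ 2 and let x be a nonzero vector in ℝ^{2g}. If x is not a real scalar multiple of any vector in ℤ^{2g}, then the orbit {M·x : M ∈ Sp(2g,ℤ)} is dense in ℝ^{2g}. If x = λ·x' for some λ ∈ ℝ and x' ∈ ℤ^{2g}, then the orbit {M·x : M ∈ Sp(2g,ℤ)} is a discrete closed subset of ℝ^{2g}. -/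
/-!
The closure `C` of the orbit is closed and `Sp(2g, ℤ)`-invariant. If `x` is not proportional to
an integer vector, two of its coordinates have irrational ratio, and an integral shear, after
rotating symplectic pairs, moves such a ratio into one symplectic pair `(x_m, x_{g+m})`. On that
pair `Sp(2g, ℤ)` contains `SL(2, ℤ)`, and a closed `SL(2, ℤ)`-invariant subset of the plane
containing a point of irrational slope is the whole plane; so `C` contains that point with its
`m`-th pair replaced by anything. Shears mixing pair `m` with another pair `n` then change one
coordinate of pair `n` at will while leaving an irrational ratio in pair `m`, and changing the
coordinates one at a time reaches every vector.

If `x = c u` with `u` integral, the orbit lies in `c ℤ^{2g}`, whose points are `|c|`-separated, so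
it is closed and discrete.
-/

open Function Set Matrix

section Coordinates

variable {g : ℕ}

def lo (g : ℕ) (i : Fin g) : Fin (2 * g) := ⟨i, by omega⟩

def hi (g : ℕ) (i : Fin g) : Fin (2 * g) := ⟨g + i, by omega⟩

lemma lo_injective : Injective (lo g) := fun i j h => by simpa [lo, Fin.ext_iff] using h

lemma hi_injective : Injective (hi g) := fun i j h => by simpa [hi, Fin.ext_iff] using h

@[simp] lemma lo_inj {i j : Fin g} : lo g i = lo g j ↔ i = j := lo_injective.eq_iff

@[simp] lemma hi_inj {i j : Fin g} : hi g i = hi g j ↔ i = j := hi_injective.eq_iff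

@[simp] lemma lo_ne_hi (i j : Fin g) : lo g i ≠ hi g j := by
  simp only [lo, hi, ne_eq, Fin.ext_iff]; omega

@[simp] lemma hi_ne_lo (i j : Fin g) : hi g i ≠ lo g j := (lo_ne_hi j i).symm

lemma exists_eq_lo_or_hi (j : Fin (2 * g)) : (∃ i, j = lo g i) ∨ ∃ i, j = hi g i := by
  by_cases h : (j : ℕ) < g
  · exact .inl ⟨⟨j, h⟩, rfl⟩
  · exact .inr ⟨⟨j - g, by omega⟩, by ext; simp only [hi]; omega⟩

lemma omegaForm_eq (x y : Fin (2 * g) → ℝ) :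
    omegaForm g x y = ∑ i, (x (lo g i) * y (hi g i) - x (hi g i) * y (lo g i)) := rfl

lemma omegaForm_add_left (x y z : Fin (2 * g) → ℝ) :
    omegaForm g (x + y) z = omegaForm g x z + omegaForm g y z := by
  simp only [omegaForm_eq, Pi.add_apply, ← Finset.sum_add_distrib]
  exact Finset.sum_congr rfl fun _ _ => by ring

lemma omegaForm_add_right (x y z : Fin (2 * g) → ℝ) :
    omegaForm g x (y + z) = omegaForm g x y + omegaForm g x z := by
  simp only [omegaForm_eq, Pi.add_apply, ← Finset.sum_add_distrib]
  exact Finset.sum_congr rfl fun _ _ => by ring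

lemma omegaForm_smul_left (c : ℝ) (x y : Fin (2 * g) → ℝ) :
    omegaForm g (c • x) y = c * omegaForm g x y := by
  simp only [omegaForm_eq, Pi.smul_apply, smul_eq_mul, Finset.mul_sum]
  exact Finset.sum_congr rfl fun _ _ => by ring

lemma omegaForm_smul_right (c : ℝ) (x y : Fin (2 * g) → ℝ) :
    omegaForm g x (c • y) = c * omegaForm g x y := by
  simp only [omegaForm_eq, Pi.smul_apply, smul_eq_mul, Finset.mul_sum]
  exact Finset.sum_congr rfl fun _ _ => by ring

lemma omegaForm_swap (x y : Fin (2 * g) → ℝ) : omegaForm g y x = -omegaForm g x y := by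
  simp only [omegaForm_eq, ← Finset.sum_neg_distrib]
  exact Finset.sum_congr rfl fun _ _ => by ring

lemma omegaForm_self (x : Fin (2 * g) → ℝ) : omegaForm g x x = 0 := by
  linarith [omegaForm_swap x x]

lemma omegaForm_single_lo (x : Fin (2 * g) → ℝ) (a : Fin g) :
    omegaForm g x (Pi.single (lo g a) 1) = -x (hi g a) := by
  rw [omegaForm_eq, Finset.sum_eq_single a (fun _ _ h => by simp [Ne.symm h]) (by simp)]
  simp

lemma omegaForm_single_hi (x : Fin (2 * g) → ℝ) (a : Fin g) :
    omegaForm g x (Pi.single (hi g a) 1) = x (lo g a) := by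
  rw [omegaForm_eq, Finset.sum_eq_single a (fun _ _ h => by simp [Ne.symm h]) (by simp)]
  simp

end Coordinates

section IntegralSymplectic

variable {g : ℕ}

/-- `⊥ : Subring ℝ` is the image of `ℤ`. -/
def IsIntVec {ι : Type*} (v : ι → ℝ) : Prop := ∀ i, v i ∈ (⊥ : Subring ℝ)

lemma mem_bot_iff_exists_int {r : ℝ} : r ∈ (⊥ : Subring ℝ) ↔ ∃ k : ℤ, r = k := by
  simp [Subring.mem_bot, eq_comm]

lemma isIntVec_intCast {ι : Type*} (u : ι → ℤ) : IsIntVec fun i => (u i : ℝ) :=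
  fun _ => intCast_mem _ _

lemma isIntVec_single {ι : Type*} [DecidableEq ι] (j : ι) : IsIntVec (Pi.single j (1 : ℝ)) :=
  fun i => by rcases eq_or_ne i j with rfl | h <;> simp [*, one_mem, zero_mem]

lemma mulVec_isIntVec {ι : Type*} [Fintype ι] {M : Matrix ι ι ℝ}
    (hM : ∀ i j, ∃ k : ℤ, M i j = k) {v : ι → ℝ} (hv : IsIntVec v) : IsIntVec (M *ᵥ v) :=
  fun i => by
    simp only [Matrix.mulVec, dotProduct]
    exact Subring.sum_mem _ fun j _ => mul_mem (mem_bot_iff_exists_int.2 (hM i j)) (hv j)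

lemma omegaForm_mem_bot {x y : Fin (2 * g) → ℝ} (hx : IsIntVec x) (hy : IsIntVec y) :
    omegaForm g x y ∈ (⊥ : Subring ℝ) :=
  Subring.sum_mem _ fun _ _ => sub_mem (mul_mem (hx _) (hy _)) (mul_mem (hx _) (hy _))

lemma one_mem_SpZ : (1 : Matrix (Fin (2 * g)) (Fin (2 * g)) ℝ) ∈ SpZ g :=
  ⟨fun x y => by simp only [Matrix.one_mulVec], fun i j => mem_bot_iff_exists_int.1 <| by
    rw [Matrix.one_apply]; split_ifs <;> simp [one_mem, zero_mem]⟩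

lemma mul_mem_SpZ {M N : Matrix (Fin (2 * g)) (Fin (2 * g)) ℝ} (hM : M ∈ SpZ g)
    (hN : N ∈ SpZ g) : M * N ∈ SpZ g := by
  refine ⟨fun x y => by rw [← Matrix.mulVec_mulVec, ← Matrix.mulVec_mulVec, hM.1, hN.1],
    fun i j => mem_bot_iff_exists_int.1 ?_⟩
  rw [Matrix.mul_apply]
  exact Subring.sum_mem _ fun l _ =>
    mul_mem (mem_bot_iff_exists_int.2 (hM.2 i l)) (mem_bot_iff_exists_int.2 (hN.2 l j))

lemma toMatrix'_mem_SpZ (f : (Fin (2 * g) → ℝ) →ₗ[ℝ] Fin (2 * g) → ℝ)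
    (hω : ∀ x y, omegaForm g (f x) (f y) = omegaForm g x y)
    (hf : ∀ v, IsIntVec v → IsIntVec (f v)) : LinearMap.toMatrix' f ∈ SpZ g := by
  refine ⟨fun x y => by simp only [LinearMap.toMatrix'_mulVec, hω], fun i j => ?_⟩
  rw [LinearMap.toMatrix'_apply]
  exact mem_bot_iff_exists_int.1 (hf _ (isIntVec_single j) i)

def IsSpZInvariant (C : Set (Fin (2 * g) → ℝ)) : Prop :=
  ∀ M ∈ SpZ g, ∀ z ∈ C, M *ᵥ z ∈ C

lemma IsSpZInvariant.map_mem {C : Set (Fin (2 * g) → ℝ)} (hC : IsSpZInvariant C)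
    (f : (Fin (2 * g) → ℝ) →ₗ[ℝ] Fin (2 * g) → ℝ)
    (hω : ∀ x y, omegaForm g (f x) (f y) = omegaForm g x y)
    (hf : ∀ v, IsIntVec v → IsIntVec (f v)) {z : Fin (2 * g) → ℝ} (hz : z ∈ C) : f z ∈ C := by
  simpa using hC _ (toMatrix'_mem_SpZ f hω hf) z hz

noncomputable def shear (u v : Fin (2 * g) → ℝ) : (Fin (2 * g) → ℝ) →ₗ[ℝ] Fin (2 * g) → ℝ where
  toFun z := z + omegaForm g z u • v + omegaForm g z v • u
  map_add' z w := by simp only [omegaForm_add_left, add_smul]; abel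
  map_smul' c z := by simp only [omegaForm_smul_left, smul_add, mul_smul, RingHom.id_apply]

lemma shear_apply (u v z : Fin (2 * g) → ℝ) :
    shear u v z = z + omegaForm g z u • v + omegaForm g z v • u := rfl

lemma omegaForm_shear {u v : Fin (2 * g) → ℝ} (huv : omegaForm g u v = 0)
    (x y : Fin (2 * g) → ℝ) : omegaForm g (shear u v x) (shear u v y) = omegaForm g x y := by
  have hvu : omegaForm g v u = 0 := by rw [omegaForm_swap, huv, neg_zero]
  simp only [shear_apply, omegaForm_add_left, omegaForm_add_right, omegaForm_smul_left,
    omegaForm_smul_right, omegaForm_self, huv, hvu, omegaForm_swap v y, omegaForm_swap u y]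
  ring

lemma shear_isIntVec {u v z : Fin (2 * g) → ℝ} (hu : IsIntVec u) (hv : IsIntVec v)
    (hz : IsIntVec z) : IsIntVec (shear u v z) := fun i =>
  add_mem (add_mem (hz i) (mul_mem (omegaForm_mem_bot hz hu) (hv i)))
    (mul_mem (omegaForm_mem_bot hz hv) (hu i))

lemma IsSpZInvariant.shear_mem {C : Set (Fin (2 * g) → ℝ)} (hC : IsSpZInvariant C)
    {u v : Fin (2 * g) → ℝ} (hu : IsIntVec u) (hv : IsIntVec v) (huv : omegaForm g u v = 0)
    {z : Fin (2 * g) → ℝ} (hz : z ∈ C) : shear u v z ∈ C :=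
  hC.map_mem _ (omegaForm_shear huv) (fun _ => shear_isIntVec hu hv) hz

end IntegralSymplectic

section SymplecticPairs

variable {g : ℕ}

def setPair (z : Fin (2 * g) → ℝ) (m : Fin g) (s t : ℝ) : Fin (2 * g) → ℝ :=
  update (update z (lo g m) s) (hi g m) t

@[simp] lemma setPair_lo (z : Fin (2 * g) → ℝ) (m : Fin g) (s t : ℝ) :
    setPair z m s t (lo g m) = s := by simp [setPair]

@[simp] lemma setPair_hi (z : Fin (2 * g) → ℝ) (m : Fin g) (s t : ℝ) :
    setPair z m s t (hi g m) = t := by simp [setPair]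

lemma setPair_of_ne (z : Fin (2 * g) → ℝ) (m : Fin g) (s t : ℝ) {j : Fin (2 * g)}
    (hlo : j ≠ lo g m) (hhi : j ≠ hi g m) : setPair z m s t j = z j := by
  simp [setPair, hlo, hhi]

@[simp] lemma setPair_setPair (z : Fin (2 * g) → ℝ) (m : Fin g) (s t s' t' : ℝ) :
    setPair (setPair z m s t) m s' t' = setPair z m s' t' := by
  simp only [setPair, update_idem, update_comm (lo_ne_hi m m)]

@[simp] lemma setPair_self (z : Fin (2 * g) → ℝ) (m : Fin g) :
    setPair z m (z (lo g m)) (z (hi g m)) = z := by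
  simp [setPair]

@[simp] lemma setPair_update_lo (z : Fin (2 * g) → ℝ) (m : Fin g) (v s t : ℝ) :
    setPair (update z (lo g m) v) m s t = setPair z m s t := by
  simp [setPair]

@[simp] lemma setPair_update_hi (z : Fin (2 * g) → ℝ) (m : Fin g) (v s t : ℝ) :
    setPair (update z (hi g m) v) m s t = setPair z m s t := by
  simp [setPair, update_comm (hi_ne_lo m m)]

lemma continuous_setPair (z : Fin (2 * g) → ℝ) (m : Fin g) :
    Continuous fun p : ℝ × ℝ => setPair z m p.1 p.2 :=
  ((continuous_const (y := z)).update (lo g m) continuous_fst).update (hi g m) continuous_snd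

noncomputable def pairMap (m : Fin g) (a b c d : ℝ) :
    (Fin (2 * g) → ℝ) →ₗ[ℝ] Fin (2 * g) → ℝ where
  toFun z := setPair z m (a * z (lo g m) + b * z (hi g m)) (c * z (lo g m) + d * z (hi g m))
  map_add' z w := by
    ext j; simp only [setPair, update_apply, Pi.add_apply]; split_ifs <;> ring
  map_smul' r z := by
    ext j; simp only [setPair, update_apply, Pi.smul_apply, smul_eq_mul, RingHom.id_apply]
    split_ifs <;> ring

lemma pairMap_apply (m : Fin g) (a b c d : ℝ) (z : Fin (2 * g) → ℝ) :
    pairMap m a b c d z =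
      setPair z m (a * z (lo g m) + b * z (hi g m)) (c * z (lo g m) + d * z (hi g m)) := rfl

lemma omegaForm_pairMap {m : Fin g} {a b c d : ℝ} (h : a * d - b * c = 1)
    (x y : Fin (2 * g) → ℝ) :
    omegaForm g (pairMap m a b c d x) (pairMap m a b c d y) = omegaForm g x y := by
  simp only [omegaForm_eq, pairMap_apply]
  refine Finset.sum_congr rfl fun i _ => ?_
  rcases eq_or_ne i m with rfl | hi
  · simp only [setPair_lo, setPair_hi]
    linear_combination (x (lo g i) * y (hi g i) - x (hi g i) * y (lo g i)) * h
  · simp [setPair_of_ne, hi]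

lemma pairMap_isIntVec (m : Fin g) {a b c d : ℤ} {z : Fin (2 * g) → ℝ} (hz : IsIntVec z) :
    IsIntVec (pairMap m a b c d z) := fun j => by
  simp only [pairMap_apply, setPair, update_apply]
  split_ifs
  · exact add_mem (mul_mem (intCast_mem _ _) (hz _)) (mul_mem (intCast_mem _ _) (hz _))
  · exact add_mem (mul_mem (intCast_mem _ _) (hz _)) (mul_mem (intCast_mem _ _) (hz _))
  · exact hz j

lemma IsSpZInvariant.pairMap_mem {C : Set (Fin (2 * g) → ℝ)} (hC : IsSpZInvariant C)
    (m : Fin g) {a b c d : ℤ} (h : a * d - b * c = 1) {z : Fin (2 * g) → ℝ} (hz : z ∈ C) :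
    pairMap m a b c d z ∈ C :=
  hC.map_mem _ (omegaForm_pairMap (by exact_mod_cast h)) (fun _ => pairMap_isIntVec m) hz

lemma IsSpZInvariant.swap_mem {C : Set (Fin (2 * g) → ℝ)} (hC : IsSpZInvariant C) (m : Fin g)
    {z : Fin (2 * g) → ℝ} (hz : z ∈ C) : setPair z m (-z (hi g m)) (z (lo g m)) ∈ C := by
  simpa [pairMap_apply] using hC.pairMap_mem m (a := 0) (b := -1) (c := 1) (d := 0) rfl hz

end SymplecticPairs

section PlanarAction

def IsSL2ZInvariant (D : Set (ℝ × ℝ)) : Prop :=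
  ∀ a b c d : ℤ, a * d - b * c = 1 →
    ∀ p ∈ D, ((a : ℝ) * p.1 + b * p.2, (c : ℝ) * p.1 + d * p.2) ∈ D

lemma exists_isCoprime_mul_of_ne_zero {m n : ℤ} (h : m ≠ 0 ∨ n ≠ 0) :
    ∃ k : ℕ, 0 < k ∧ ∃ a b : ℤ, IsCoprime a b ∧ m = a * k ∧ n = b * k := by
  obtain ⟨k, a, b, hk, hab, rfl, rfl⟩ := Int.exists_gcd_one' (Int.gcd_pos_iff.2 h)
  exact ⟨k, hk, a, b, Int.isCoprime_iff_gcd_eq_one.2 hab, rfl, rfl⟩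

lemma exists_isCoprime_add_mem_Ioo {α β : ℝ} (h : Irrational (α / β)) {ε : ℝ} (hε : 0 < ε) :
    ∃ a b : ℤ, IsCoprime a b ∧ (a : ℝ) * α + b * β ∈ Ioo 0 ε := by
  obtain ⟨_, hz, hz0, hzε⟩ := (dense_addSubgroupClosure_pair_iff.2 h).exists_between hε
  obtain ⟨m, n, rfl⟩ := AddSubgroup.mem_closure_pair.1 hz
  have hmn : m ≠ 0 ∨ n ≠ 0 := by
    by_contra! h0
    simp [h0] at hz0
  obtain ⟨k, hk, a, b, hab, rfl, rfl⟩ := exists_isCoprime_mul_of_ne_zero hmn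
  have hk1 : (1 : ℝ) ≤ k := by exact_mod_cast hk
  have hsplit : (a * k : ℤ) • α + (b * k : ℤ) • β = k * ((a : ℝ) * α + b * β) := by
    simp only [zsmul_eq_mul]; push_cast; ring
  rw [hsplit] at hz0 hzε
  have hpos : 0 < (a : ℝ) * α + b * β := pos_of_mul_pos_right hz0 (by positivity)
  exact ⟨a, b, hab, hpos, by nlinarith⟩

variable {D : Set (ℝ × ℝ)}

lemma IsSL2ZInvariant.zero_mem (hinv : IsSL2ZInvariant D) (hD : IsClosed D) {α β : ℝ}
    (hαβ : (α, β) ∈ D) (h : Irrational (α / β)) (s : ℝ) : (0, s) ∈ D := by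
  refine hD.closure_subset (Metric.mem_closure_iff.2 fun ε hε => ?_)
  obtain ⟨a, b, ⟨u, v, huv⟩, hδ0, hδε⟩ := exists_isCoprime_add_mem_Ioo h hε
  set δ := (a : ℝ) * α + b * β
  -- complete `(a, b)` to a matrix of `SL(2, ℤ)` whose second row moves `(α, β)` close to `s`
  set k := round ((s - (-v * α + u * β)) / δ)
  refine ⟨_, hinv a b (-v + k * a) (u + k * b) (by linear_combination huv) _ hαβ, ?_⟩
  have hk := abs_sub_round ((s - (-v * α + u * β)) / δ)
  have hrw : s - ((((-v + k * a : ℤ) : ℝ)) * α + ((u + k * b : ℤ) : ℝ) * β) =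
      δ * ((s - (-v * α + u * β)) / δ - k) := by
    field_simp; push_cast; ring
  rw [Prod.dist_eq, max_lt_iff, Real.dist_eq, Real.dist_eq, zero_sub, abs_neg,
    abs_of_pos hδ0, hrw, abs_mul, abs_of_pos hδ0]
  exact ⟨hδε, by nlinarith⟩

lemma IsSL2ZInvariant.intCast_mul_mem (hinv : IsSL2ZInvariant D) (hD : IsClosed D) {α β : ℝ}
    (hαβ : (α, β) ∈ D) (h : Irrational (α / β)) (b d : ℤ) (s : ℝ) :
    ((b : ℝ) * s, (d : ℝ) * s) ∈ D := by
  by_cases hbd : b = 0 ∧ d = 0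
  · simpa [hbd.1, hbd.2] using hinv.zero_mem hD hαβ h 0
  obtain ⟨k, -, b, d, ⟨u, v, huv⟩, rfl, rfl⟩ :=
    exists_isCoprime_mul_of_ne_zero (not_and_or.1 hbd)
  convert hinv v b (-u) d (by linear_combination huv) _ (hinv.zero_mem hD hαβ h (k * s))
    using 1
  ext <;> push_cast <;> ring

theorem IsSL2ZInvariant.eq_univ (hinv : IsSL2ZInvariant D) (hD : IsClosed D) {α β : ℝ}
    (hαβ : (α, β) ∈ D) (h : Irrational (α / β)) : D = univ := by
  have hQ : range (Prod.map ((↑) : ℚ → ℝ) ((↑) : ℚ → ℝ)) ⊆ D := by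
    rintro _ ⟨⟨q, r⟩, rfl⟩
    convert hinv.intCast_mul_mem hD hαβ h (q.num * r.den) (r.num * q.den) (1 / (q.den * r.den))
      using 1
    ext <;> simp [Rat.cast_def] <;> field_simp
  have hdense : DenseRange (Prod.map ((↑) : ℚ → ℝ) ((↑) : ℚ → ℝ)) :=
    Rat.denseRange_cast.prodMap Rat.denseRange_cast
  exact eq_univ_of_univ_subset (hdense.closure_range ▸ closure_minimal hQ hD)

end PlanarAction

section Density

variable {g : ℕ} {C : Set (Fin (2 * g) → ℝ)}

lemma irrational_div_add {p q r : ℝ} (hpq : ¬Irrational (p / q)) (hrp : Irrational (r / p)) :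
    Irrational (p / (q + r)) := by
  rw [← irrational_inv_iff, inv_div] at hpq ⊢
  obtain ⟨ρ, hρ⟩ := not_not.1 hpq
  rw [add_div, ← hρ]
  exact hrp.ratCast_add ρ

lemma IsSpZInvariant.exists_irrational_pair_of_lo_lo (hinv : IsSpZInvariant C)
    {z : Fin (2 * g) → ℝ} (hz : z ∈ C) {a b : Fin g} (hab : a ≠ b)
    (h : Irrational (z (lo g b) / z (lo g a))) :
    ∃ y ∈ C, ∃ m, Irrational (y (lo g m) / y (hi g m)) := by
  by_cases ha : Irrational (z (lo g a) / z (hi g a))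
  · exact ⟨z, hz, a, ha⟩
  -- this shear adds `z (lo g b)` to `z (hi g a)`
  refine ⟨_, hinv.shear_mem (isIntVec_single (hi g a)) (isIntVec_single (hi g b))
    (by simp [omegaForm_single_hi]) hz, a, ?_⟩
  simpa [shear_apply, omegaForm_single_hi, Pi.single_apply, hab] using irrational_div_add ha h

lemma IsSpZInvariant.exists_irrational_pair (hinv : IsSpZInvariant C) {x : Fin (2 * g) → ℝ}
    (hx : x ∈ C) {i j : Fin (2 * g)} (hij : Irrational (x i / x j)) :
    ∃ y ∈ C, ∃ m, Irrational (y (lo g m) / y (hi g m)) := by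
  have hself (r : ℝ) : ¬Irrational (r / r) := by
    rcases eq_or_ne r 0 with rfl | hr <;> simp [*]
  rcases exists_eq_lo_or_hi i with ⟨a, rfl⟩ | ⟨a, rfl⟩ <;>
    rcases exists_eq_lo_or_hi j with ⟨b, rfl⟩ | ⟨b, rfl⟩ <;>
    rcases eq_or_ne a b with rfl | hab
  · exact absurd hij (hself _)
  · exact hinv.exists_irrational_pair_of_lo_lo hx hab.symm hij
  · exact ⟨x, hx, a, hij⟩
  · refine hinv.exists_irrational_pair_of_lo_lo (hinv.swap_mem b hx) hab.symm ?_
    simpa [setPair_of_ne, hab, div_neg] using hij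
  · exact ⟨x, hx, a, by simpa using hij.inv⟩
  · refine hinv.exists_irrational_pair_of_lo_lo (hinv.swap_mem a hx) hab.symm ?_
    simpa [setPair_of_ne, hab.symm, neg_div] using hij
  · exact absurd hij (hself _)
  · refine hinv.exists_irrational_pair_of_lo_lo
      (hinv.swap_mem b (hinv.swap_mem a hx)) hab.symm ?_
    simpa [setPair_of_ne, hab, hab.symm, neg_div, div_neg] using hij

def FreeAt (C : Set (Fin (2 * g) → ℝ)) (m : Fin g) (b : Fin (2 * g) → ℝ) : Prop :=
  ∀ s t, setPair b m s t ∈ C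

lemma IsSpZInvariant.freeAt_of_irrational (hinv : IsSpZInvariant C) (hC : IsClosed C)
    {z : Fin (2 * g) → ℝ} (hz : z ∈ C) {m : Fin g} (h : Irrational (z (lo g m) / z (hi g m))) :
    FreeAt C m z := by
  have hD : IsSL2ZInvariant {p : ℝ × ℝ | setPair z m p.1 p.2 ∈ C} := by
    intro a b c d hdet p hp
    simpa [pairMap_apply] using hinv.pairMap_mem m hdet hp
  have := hD.eq_univ (hC.preimage (continuous_setPair z m)) (by simpa using hz) h
  exact fun s t => (eq_univ_iff_forall.1 this (s, t) :)

lemma FreeAt.update_lo (hinv : IsSpZInvariant C) (hC : IsClosed C) {m n : Fin g}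
    (hnm : n ≠ m) {b : Fin (2 * g) → ℝ} (hb : FreeAt C m b) (v : ℝ) :
    FreeAt C m (update b (lo g n) v) := by
  rcases eq_or_ne v (b (lo g n)) with rfl | hv
  · rwa [update_eq_self]
  set t := b (lo g n) - v
  have ht : t ≠ 0 := sub_ne_zero.2 hv.symm
  -- this shear subtracts `t` from `lo g n` and `b (hi g n)` from `lo g m`
  have hy : shear (Pi.single (lo g m) 1) (Pi.single (lo g n) 1)
      (setPair b m (b (hi g n) + √2 * t) t) = setPair (update b (lo g n) v) m (√2 * t) t := by
    ext j
    simp only [shear_apply, omegaForm_single_lo, setPair, update_apply]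
    split_ifs <;> simp_all [t]
  have hyC := hinv.shear_mem (isIntVec_single (lo g m)) (isIntVec_single (lo g n))
    (by simp [omegaForm_single_lo]) (hb (b (hi g n) + √2 * t) t)
  rw [hy] at hyC
  intro s s'
  simpa using hinv.freeAt_of_irrational hC hyC (m := m)
    (by simpa [ht] using irrational_sqrt_two) s s'

lemma FreeAt.update_hi (hinv : IsSpZInvariant C) (hC : IsClosed C) {m n : Fin g}
    (hnm : n ≠ m) {b : Fin (2 * g) → ℝ} (hb : FreeAt C m b) (v : ℝ) :
    FreeAt C m (update b (hi g n) v) := by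
  rcases eq_or_ne v (b (hi g n)) with rfl | hv
  · rwa [update_eq_self]
  set s := v - b (hi g n)
  have hs : s ≠ 0 := sub_ne_zero.2 hv
  -- this shear adds `s` to `hi g n` and `b (lo g n)` to `hi g m`
  have hy : shear (Pi.single (hi g m) 1) (Pi.single (hi g n) 1)
      (setPair b m s (√2 * s - b (lo g n))) = setPair (update b (hi g n) v) m s (√2 * s) := by
    ext j
    simp only [shear_apply, omegaForm_single_hi, setPair, update_apply]
    split_ifs <;> simp_all [s]
  have hyC := hinv.shear_mem (isIntVec_single (hi g m)) (isIntVec_single (hi g n))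
    (by simp [omegaForm_single_hi]) (hb s (√2 * s - b (lo g n)))
  rw [hy] at hyC
  intro s' t'
  simpa using hinv.freeAt_of_irrational hC hyC (m := m)
    (by rw [setPair_lo, setPair_hi, div_mul_cancel_right₀ hs]; exact irrational_sqrt_two.inv)
    s' t'

lemma FreeAt.update (hinv : IsSpZInvariant C) (hC : IsClosed C) {m : Fin g}
    {b : Fin (2 * g) → ℝ} (hb : FreeAt C m b) (j : Fin (2 * g)) (v : ℝ) :
    FreeAt C m (update b j v) := by
  rcases exists_eq_lo_or_hi j with ⟨n, rfl⟩ | ⟨n, rfl⟩ <;> rcases eq_or_ne n m with rfl | hnm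
  · simpa [FreeAt] using hb
  · exact hb.update_lo hinv hC hnm v
  · simpa [FreeAt] using hb
  · exact hb.update_hi hinv hC hnm v

lemma eq_univ_of_update_mem {ι β : Type*} [Fintype ι] [DecidableEq ι] {S : Set (ι → β)}
    {b : ι → β} (hb : b ∈ S) (hS : ∀ f ∈ S, ∀ j v, update f j v ∈ S) : S = univ := by
  refine eq_univ_of_forall fun w => ?_
  have key (K : Finset ι) : K.piecewise w b ∈ S := by
    induction K using Finset.induction_on with
    | empty => simpa
    | insert j K _ ih => rw [Finset.piecewise_insert]; exact hS _ ih j (w j)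
  simpa using key Finset.univ

theorem IsSpZInvariant.eq_univ (hinv : IsSpZInvariant C) (hC : IsClosed C)
    {x : Fin (2 * g) → ℝ} (hx : x ∈ C) {i j : Fin (2 * g)} (hij : Irrational (x i / x j)) :
    C = univ := by
  obtain ⟨z, hz, m, hm⟩ := hinv.exists_irrational_pair hx hij
  have hfree : {b | FreeAt C m b} = univ :=
    eq_univ_of_update_mem (hinv.freeAt_of_irrational hC hz hm) fun b hb j v =>
      hb.update hinv hC j v
  refine eq_univ_of_forall fun w => ?_
  have hw : FreeAt C m w := eq_univ_iff_forall.1 hfree w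
  simpa using hw (w (lo g m)) (w (hi g m))

end Density

lemma exists_irrational_div {ι : Type*} [Finite ι] {x : ι → ℝ}
    (hx : ¬∃ (c : ℝ) (u : ι → ℤ), x = c • fun i => (u i : ℝ)) :
    ∃ i j, Irrational (x i / x j) := by
  by_contra! hrat
  obtain ⟨j, hj⟩ : ∃ j, x j ≠ 0 := by
    by_contra! h0
    exact hx ⟨0, 0, funext fun i => by simp [h0]⟩
  choose r hr using fun i => not_not.1 (hrat i j)
  have := Fintype.ofFinite ι
  -- a common denominator `N` of the rational ratios `r i = x i / x j`
  obtain ⟨⟨N, hN⟩, hint⟩ :=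
    IsLocalization.exist_integer_multiples (nonZeroDivisors ℤ) Finset.univ r
  choose k hk using fun i => hint i (Finset.mem_univ i)
  have hN0 : (N : ℝ) ≠ 0 := by exact_mod_cast nonZeroDivisors.ne_zero hN
  refine hx ⟨x j / N, k, funext fun i => ?_⟩
  have hki : (k i : ℝ) = N * (x i / x j) := by
    rw [← hr i]; exact_mod_cast congrArg (Rat.cast : ℚ → ℝ) (hk i)
  simp only [Pi.smul_apply, smul_eq_mul, hki]
  field_simp

section Orbit

variable {g : ℕ}

def spOrbit (g : ℕ) (x : Fin (2 * g) → ℝ) : Set (Fin (2 * g) → ℝ) :=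
  {y | ∃ M ∈ SpZ g, y = M *ᵥ x}

lemma isSpZInvariant_closure_spOrbit (x : Fin (2 * g) → ℝ) :
    IsSpZInvariant (closure (spOrbit g x)) := by
  intro M hM z hz
  refine map_mem_closure (Continuous.matrix_mulVec continuous_const continuous_id) hz ?_
  rintro _ ⟨N, hN, rfl⟩
  exact ⟨M * N, mul_mem_SpZ hM hN, Matrix.mulVec_mulVec _ _ _⟩

lemma dense_spOrbit {x : Fin (2 * g) → ℝ}
    (hx : ¬∃ (c : ℝ) (u : Fin (2 * g) → ℤ), x = c • fun i => (u i : ℝ)) :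
    Dense (spOrbit g x) := by
  obtain ⟨i, j, hij⟩ := exists_irrational_div hx
  exact dense_iff_closure_eq.2 <| (isSpZInvariant_closure_spOrbit x).eq_univ isClosed_closure
    (subset_closure ⟨1, one_mem_SpZ, (Matrix.one_mulVec x).symm⟩) hij

lemma one_le_dist_of_isIntVec {ι : Type*} [Fintype ι] {v w : ι → ℝ} (hv : IsIntVec v)
    (hw : IsIntVec w) (hvw : v ≠ w) : 1 ≤ dist v w := by
  obtain ⟨i, hi⟩ := Function.ne_iff.1 hvw
  obtain ⟨k, hk⟩ := mem_bot_iff_exists_int.1 (sub_mem (hv i) (hw i))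
  have hk0 : k ≠ 0 := by
    rintro rfl
    exact hi (sub_eq_zero.1 (by simpa using hk))
  calc (1 : ℝ) ≤ |(k : ℝ)| := by exact_mod_cast Int.one_le_abs hk0
    _ = dist (v i) (w i) := by rw [Real.dist_eq, hk]
    _ ≤ dist v w := dist_le_pi_dist v w i

lemma spOrbit_smul_pairwise_le_dist (c : ℝ) (u : Fin (2 * g) → ℤ) :
    (spOrbit g (c • fun i => (u i : ℝ))).Pairwise fun y y' => |c| ≤ dist y y' := by
  rintro _ ⟨M, hM, rfl⟩ _ ⟨M', hM', rfl⟩ hne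
  rw [Matrix.mulVec_smul, Matrix.mulVec_smul] at hne ⊢
  rw [dist_smul₀, Real.norm_eq_abs]
  refine le_mul_of_one_le_right (abs_nonneg c) (one_le_dist_of_isIntVec
    (mulVec_isIntVec hM.2 (isIntVec_intCast u)) (mulVec_isIntVec hM'.2 (isIntVec_intCast u)) ?_)
  rintro h
  exact hne (by rw [h])

end Orbit

theorem spz_orbit_dense_or_discrete_general (g : ℕ)
    (x : Fin (2 * g) → ℝ) (hx : x ≠ 0) :
    ((¬ ∃ (c : ℝ) (u : Fin (2 * g) → ℤ), x = c • fun i => ((u i : ℤ) : ℝ)) →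
      Dense {y : Fin (2 * g) → ℝ | ∃ M ∈ SpZ g, y = M.mulVec x}) ∧
    ((∃ (c : ℝ) (u : Fin (2 * g) → ℤ), x = c • fun i => ((u i : ℤ) : ℝ)) →
      IsClosed {y : Fin (2 * g) → ℝ | ∃ M ∈ SpZ g, y = M.mulVec x} ∧
        DiscreteTopology ↥{y : Fin (2 * g) → ℝ | ∃ M ∈ SpZ g, y = M.mulVec x}) := by
  refine ⟨dense_spOrbit, ?_⟩
  rintro ⟨c, u, rfl⟩
  have hc : 0 < |c| := abs_pos.2 fun h => hx (by rw [h, zero_smul])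
  have hsep := spOrbit_smul_pairwise_le_dist c u
  exact ⟨Metric.isClosed_of_pairwise_le_dist hc hsep,
    DiscreteTopology.of_forall_le_dist hc fun a b hab => hsep a.2 b.2 (Subtype.coe_ne_coe.2 hab)⟩

/-- for `x ≠ 0` in `ℝ^(2g)`: if `x` is not a real scalar multiple
of an integer vector then the `Sp(2g,ℤ)`-orbit of `x` is dense in `ℝ^(2g)`;
otherwise the orbit is a discrete closed subset of `ℝ^(2g)`. -/
theorem spz_orbit_dense_or_discrete (g : ℕ) (hg : 2 ≤ g)
    (x : Fin (2 * g) → ℝ) (hx : x ≠ 0) :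
    ((¬ ∃ (c : ℝ) (u : Fin (2 * g) → ℤ), x = c • fun i => ((u i : ℤ) : ℝ)) →
      Dense {y : Fin (2 * g) → ℝ | ∃ M ∈ SpZ g, y = M.mulVec x}) ∧
    ((∃ (c : ℝ) (u : Fin (2 * g) → ℤ), x = c • fun i => ((u i : ℤ) : ℝ)) →
      IsClosed {y : Fin (2 * g) → ℝ | ∃ M ∈ SpZ g, y = M.mulVec x} ∧
        DiscreteTopology ↥{y : Fin (2 * g) → ℝ | ∃ M ∈ SpZ g, y = M.mulVec x}) :=
  spz_orbit_dense_or_discrete_general g x hx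
end

section
/- Let a, b ∈ ℂˣ be such that the subgroup of ℂˣ generated by a and b is not contained in the unit circle (equivalently, |a| ≠ 1 or |b| ≠ 1). Then there exist a', b' ∈ ℂ with exp(a') = a, exp(b') = b, and Re(a')·Im(b') − Im(a')·Re(b') > 0; that is, (a', b') is an oriented basis of ℂ as a real vector space. -/
/-!
Take the principal logarithms. Adding `2πin` to one of them keeps it a logarithm and
changes `Re(a')·Im(b') − Im(a')·Re(b')` by `2πn` times the real part of the other one,
which is `log |a|` or `log |b|`. If that real part is nonzero, a suitable integer `n` makes
the expression positive.
-/

open Complex Real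

theorem Real.exists_int_add_mul_pos (x : ℝ) {c : ℝ} (hc : c ≠ 0) :
    ∃ n : ℤ, 0 < x + n * c := by
  have of_pos : ∀ c : ℝ, 0 < c → ∃ n : ℤ, 0 < x + n * c := fun c hc => by
    obtain ⟨n, hn⟩ := exists_int_gt (-x / c)
    exact ⟨n, by linarith [(div_lt_iff₀ hc).mp hn]⟩
  rcases hc.lt_or_gt with hneg | hpos
  · obtain ⟨n, hn⟩ := of_pos (-c) (neg_pos.mpr hneg)
    exact ⟨-n, by push_cast; linarith⟩
  · exact of_pos c hpos

namespace Complex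

theorem exists_pos_re_mul_im_sub_add_int_mul_two_pi_I (z w : ℂ) (hz : z.re ≠ 0) :
    ∃ n : ℤ, 0 < z.re * (w + n * (2 * π * I)).im - z.im * (w + n * (2 * π * I)).re := by
  obtain ⟨n, hn⟩ := Real.exists_int_add_mul_pos (z.re * w.im - z.im * w.re)
    (mul_ne_zero (by positivity) hz : 2 * π * z.re ≠ 0)
  exact ⟨n, by simp only [add_re, add_im, mul_re, mul_im, intCast_re, intCast_im, re_ofNat,
    im_ofNat, ofReal_re, ofReal_im, I_re, I_im]; linarith⟩

theorem exists_pos_add_int_mul_two_pi_I_re_mul_im_sub (z w : ℂ) (hw : w.re ≠ 0) :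
    ∃ n : ℤ, 0 < (z + n * (2 * π * I)).re * w.im - (z + n * (2 * π * I)).im * w.re := by
  obtain ⟨n, hn⟩ := Real.exists_int_add_mul_pos (z.re * w.im - z.im * w.re)
    (mul_ne_zero (by positivity) (neg_ne_zero.mpr hw) : 2 * π * -w.re ≠ 0)
  exact ⟨n, by simp only [add_re, add_im, mul_re, mul_im, intCast_re, intCast_im, re_ofNat,
    im_ofNat, ofReal_re, ofReal_im, I_re, I_im]; linarith⟩

theorem exp_log_add_int_mul_two_pi_I {z : ℂ} (hz : z ≠ 0) (n : ℤ) :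
    exp (log z + n * (2 * π * I)) = z := by
  rw [exp_periodic.int_mul n, exp_log hz]

theorem log_re_ne_zero {z : ℂ} (hz : z ≠ 0) (h : ‖z‖ ≠ 1) : (log z).re ≠ 0 := by
  rw [log_re]
  exact Real.log_ne_zero_of_pos_of_ne_one (norm_pos_iff.mpr hz) h

end Complex

/-- if `a, b ∈ ℂˣ` generate a subgroup not contained in the unit
circle (equivalently `|a| ≠ 1` or `|b| ≠ 1`), then there are logarithms
`a', b'` of `a, b` forming an oriented real basis of `ℂ`, i.e. with
`Re(a')·Im(b') - Im(a')·Re(b') > 0`. -/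
theorem exists_oriented_logarithms (a b : ℂˣ)
    (h : ‖(a : ℂ)‖ ≠ 1 ∨ ‖(b : ℂ)‖ ≠ 1) :
    ∃ a' b' : ℂ, Complex.exp a' = (a : ℂ) ∧ Complex.exp b' = (b : ℂ) ∧
      0 < a'.re * b'.im - a'.im * b'.re := by
  rcases h with ha | hb
  · obtain ⟨n, hn⟩ := exists_pos_re_mul_im_sub_add_int_mul_two_pi_I (log a) (log b)
      (log_re_ne_zero a.ne_zero ha)
    exact ⟨_, _, exp_log a.ne_zero, exp_log_add_int_mul_two_pi_I b.ne_zero n, hn⟩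
  · obtain ⟨n, hn⟩ := exists_pos_add_int_mul_two_pi_I_re_mul_im_sub (log a) (log b)
      (log_re_ne_zero b.ne_zero hb)
    exact ⟨_, _, exp_log_add_int_mul_two_pi_I a.ne_zero n, exp_log b.ne_zero, hn⟩
end
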